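/- For any n×n complex matrix A, the matrix A + iA* is normal, and for every j: √2·s_j(Re(A) + Im(A)) ≤ s_j(A + iA*) ≤ 2·s_j(Re(A) + Im(A)), where Re(A) = (A + A*)/2 and Im(A) = (A − A*)/(2i). -/

import Mathlib

open Matrix
open scoped ComplexOrder

/-- The `j`-th largest singular value of a square complex matrix (`j : Fin m`, zero-indexed,
so `sv A 0` is the largest singular value). It is defined as the square root of the `j`-th
largest eigenvalue of `Aᴴ * A`. -/
noncomputable def sv {m : ℕ} (A : Matrix (Fin m) (Fin m) ℂ) (j : Fin m) : ℝ :=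
  Real.sqrt ((Matrix.isHermitian_conjTranspose_mul_self A).eigenvalues
    (Tuple.sort ((Matrix.isHermitian_conjTranspose_mul_self A).eigenvalues) j.rev))

/-- The positive semidefinite square root (the older Mathlib definition, removed since). -/
noncomputable def Matrix.PosSemidef.sqrt {m : ℕ} {A : Matrix (Fin m) (Fin m) ℂ} (hA : A.PosSemidef) :
    Matrix (Fin m) (Fin m) ℂ :=
  hA.1.eigenvectorUnitary.1 * diagonal ((↑) ∘ (√·) ∘ hA.1.eigenvalues) *
    (star hA.1.eigenvectorUnitary : Matrix (Fin m) (Fin m) ℂ)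

open scoped MatrixOrder in
theorem Matrix.PosSemidef.posSemidef_sqrt {m : ℕ} {A : Matrix (Fin m) (Fin m) ℂ}
    (hA : A.PosSemidef) : hA.sqrt.PosSemidef := by
  have h : hA.sqrt = cfc Real.sqrt A := by
    rw [hA.1.cfc_eq]; rfl
  rw [h, ← Matrix.nonneg_iff_posSemidef]
  exact cfc_nonneg (fun x _ => Real.sqrt_nonneg x)

/-- The absolute value `|A| = (Aᴴ A)^{1/2}` of a square complex matrix. -/
noncomputable def matAbs {m : ℕ} (A : Matrix (Fin m) (Fin m) ℂ) : Matrix (Fin m) (Fin m) ℂ :=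
  (Matrix.posSemidef_conjTranspose_mul_self A).sqrt

/-- The `2n × 2n` block matrix `[[A, B], [C, D]]`, reindexed by `Fin (n + n)`. -/
noncomputable def blk {n : ℕ} (A B C D : Matrix (Fin n) (Fin n) ℂ) :
    Matrix (Fin (n + n)) (Fin (n + n)) ℂ :=
  Matrix.reindex finSumFinEquiv finSumFinEquiv (Matrix.fromBlocks A B C D)

/-- `f(P)` for a Hermitian matrix `P`, via the spectral functional calculus. -/
noncomputable def herCfc {m : ℕ} {P : Matrix (Fin m) (Fin m) ℂ} (hP : P.IsHermitian)
    (f : ℝ → ℝ) : Matrix (Fin m) (Fin m) ℂ :=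
  hP.cfc f

/-- `|A| ^ r` (real power of the absolute value), via the functional calculus. -/
noncomputable def matAbsPow {m : ℕ} (A : Matrix (Fin m) (Fin m) ℂ) (r : ℝ) :
    Matrix (Fin m) (Fin m) ℂ :=
  herCfc (Matrix.posSemidef_conjTranspose_mul_self A).posSemidef_sqrt.1 (fun t => t ^ r)

/-- `f(|A|)`, via the functional calculus. -/
noncomputable def matAbsCfc {m : ℕ} (A : Matrix (Fin m) (Fin m) ℂ) (f : ℝ → ℝ) :
    Matrix (Fin m) (Fin m) ℂ :=
  herCfc (Matrix.posSemidef_conjTranspose_mul_self A).posSemidef_sqrt.1 f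

/-- The operator norm: the largest singular value. -/
noncomputable def opNorm {m : ℕ} (A : Matrix (Fin m) (Fin m) ℂ) : ℝ :=
  ⨆ j, sv A j

/-! The real and imaginary parts combine to a scalar multiple of `A + i A*`:
`Re A + Im A = ((1 - i) / 2) • (A + i A*)`. Since `|(1 - i) / 2| = 1 / √2`, every singular value
of `Re A + Im A` is exactly `1 / √2` times the corresponding one of `A + i A*`, which gives the
left inequality with equality and the right one because `√2 ≤ 2`. Normality of `a + i a*`
holds in any complex star algebra by expanding both products. -/

theorem isStarNormal_add_I_smul_star {R : Type*} [Ring R] [StarRing R] [Module ℂ R]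
    [StarModule ℂ R] [IsScalarTower ℂ R R] [SMulCommClass ℂ R R] (a : R) :
    IsStarNormal (a + Complex.I • star a) := by
  have h_star : star (a + Complex.I • star a) = star a - Complex.I • a := by
    rw [star_add, star_smul, star_star, Complex.star_def, Complex.conj_I, neg_smul,
      sub_eq_add_neg]
  refine ⟨?_⟩
  rw [commute_iff_eq, h_star]
  simp only [sub_mul, mul_sub, add_mul, mul_add, mul_smul_comm, smul_mul_assoc, smul_sub,
    smul_add, smul_smul, Complex.I_mul_I, neg_one_smul]
  abel

theorem two_inv_smul_add_add_two_mul_I_inv_smul_sub {M : Type*} [AddCommGroup M] [Module ℂ M]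
    (a b : M) :
    (2 : ℂ)⁻¹ • (a + b) + (2 * Complex.I)⁻¹ • (a - b) =
      ((1 - Complex.I) / 2) • (a + Complex.I • b) := by
  have h2I : (2 * Complex.I)⁻¹ = -Complex.I / 2 := by
    rw [mul_inv, Complex.inv_I]; ring
  rw [h2I]
  linear_combination (norm := module) (1 / 2 : ℂ) • Complex.I_sq • b

theorem Tuple.comp_sort_eq_of_map_univ_eq {α : Type*} [LinearOrder α] {m : ℕ}
    {f g : Fin m → α}
    (h : Finset.univ.val.map f = Finset.univ.val.map g) :
    f ∘ Tuple.sort f = g ∘ Tuple.sort g := by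
  have hperm : (List.ofFn (f ∘ Tuple.sort f)).Perm (List.ofFn (g ∘ Tuple.sort g)) := by
    have hfg : (List.ofFn f).Perm (List.ofFn g) := by
      rw [← Multiset.coe_eq_coe, ← Fin.univ_val_map, ← Fin.univ_val_map, h]
    exact (((Tuple.sort f).ofFn_comp_perm f).trans hfg).trans
      ((Tuple.sort g).ofFn_comp_perm g).symm
  exact List.ofFn_injective <| hperm.eq_of_sortedLE
    (List.sortedLE_ofFn_iff.mpr (Tuple.monotone_sort f))
    (List.sortedLE_ofFn_iff.mpr (Tuple.monotone_sort g))

theorem Tuple.comp_sort_comp_of_monotone {α β : Type*} [LinearOrder α] [LinearOrder β] {m : ℕ}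
    {φ : α → β} (hφ : Monotone φ) (f : Fin m → α) :
    (φ ∘ f) ∘ Tuple.sort (φ ∘ f) = φ ∘ f ∘ Tuple.sort f :=
  ((Tuple.comp_sort_eq_comp_iff_monotone).mpr (hφ.comp (Tuple.monotone_sort f))).symm


namespace Matrix.IsHermitian

open Polynomial in
theorem map_eigenvalues_eq_of_eq_unitary_conj {𝕜 n : Type*} [RCLike 𝕜] [Fintype n]
    [DecidableEq n] {M : Matrix n n 𝕜} (hM : M.IsHermitian) {U : Matrix n n 𝕜}
    (hU : U ∈ unitaryGroup n 𝕜) {d : n → ℝ}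
    (h : M = U * diagonal (RCLike.ofReal ∘ d) * star U) :
    Finset.univ.val.map hM.eigenvalues = Finset.univ.val.map d := by
  apply Multiset.map_injective (RCLike.ofReal_injective (K := 𝕜))
  rw [Multiset.map_map, Multiset.map_map, ← hM.roots_charpoly_eq_eigenvalues, h,
    charpoly_mul_comm, ← Matrix.mul_assoc, (mem_unitaryGroup_iff').mp hU, Matrix.one_mul,
    charpoly_diagonal, Finset.prod_eq_multiset_prod]
  have := roots_multiset_prod_X_sub_C (Finset.univ.val.map (RCLike.ofReal (K := 𝕜) ∘ d))
  rwa [Multiset.map_map] at this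

theorem eigenvalues_comp_sort_of_eq_smul {m : ℕ} {M N : Matrix (Fin m) (Fin m) ℂ}
    (hM : M.IsHermitian) (hN : N.IsHermitian) {r : ℝ} (hr : 0 ≤ r) (h : N = r • M) :
    hN.eigenvalues ∘ Tuple.sort hN.eigenvalues =
      (r * ·) ∘ hM.eigenvalues ∘ Tuple.sort hM.eigenvalues := by
  set U : Matrix (Fin m) (Fin m) ℂ := ↑hM.eigenvectorUnitary
  have h_conj : N = U * diagonal (RCLike.ofReal ∘ ((r * ·) ∘ hM.eigenvalues)) * star U := by
    rw [h]
    conv_lhs =>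
      rw [hM.spectral_theorem, Unitary.conjStarAlgAut_apply, ← smul_mul_assoc, ← mul_smul_comm]
    rw [← diagonal_smul]
    congr 3
    ext i
    simp
  rw [Tuple.comp_sort_eq_of_map_univ_eq
      (hN.map_eigenvalues_eq_of_eq_unitary_conj hM.eigenvectorUnitary.2 h_conj),
    Tuple.comp_sort_comp_of_monotone (monotone_mul_left_of_nonneg hr)]

end Matrix.IsHermitian

theorem sv_nonneg {m : ℕ} (A : Matrix (Fin m) (Fin m) ℂ) (j : Fin m) : 0 ≤ sv A j :=
  Real.sqrt_nonneg _

theorem sv_smul {m : ℕ} (c : ℂ) (A : Matrix (Fin m) (Fin m) ℂ) (j : Fin m) :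
    sv (c • A) j = ‖c‖ * sv A j := by
  have h : (c • A)ᴴ * (c • A) = (‖c‖ ^ 2 : ℝ) • (Aᴴ * A) := by
    rw [conjTranspose_smul, smul_mul_smul_comm, Complex.star_def, Complex.conj_mul',
      ← Complex.coe_smul]
    norm_cast
  have h_eig := congrFun ((isHermitian_conjTranspose_mul_self A).eigenvalues_comp_sort_of_eq_smul
    (isHermitian_conjTranspose_mul_self (c • A)) (sq_nonneg ‖c‖) h) j.rev
  simp only [Function.comp_apply] at h_eig
  rw [sv, sv, h_eig, Real.sqrt_mul (sq_nonneg _), Real.sqrt_sq (norm_nonneg c)]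

theorem norm_one_sub_I_div_two : ‖(1 - Complex.I) / 2‖ = √2 / 2 := by
  rw [norm_div, Complex.norm_eq_sqrt_sq_add_sq]
  norm_num

theorem sv_add_I_smul_conjTranspose {n : ℕ} (A : Matrix (Fin n) (Fin n) ℂ) :
    (A + Complex.I • Aᴴ)ᴴ * (A + Complex.I • Aᴴ) =
        (A + Complex.I • Aᴴ) * (A + Complex.I • Aᴴ)ᴴ ∧
      ∀ j : Fin n,
        Real.sqrt 2 *
            sv ((2 : ℂ)⁻¹ • (A + Aᴴ) + (2 * Complex.I)⁻¹ • (A - Aᴴ)) j ≤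
          sv (A + Complex.I • Aᴴ) j ∧
        sv (A + Complex.I • Aᴴ) j ≤
          2 * sv ((2 : ℂ)⁻¹ • (A + Aᴴ) + (2 * Complex.I)⁻¹ • (A - Aᴴ)) j := by
  refine ⟨(isStarNormal_add_I_smul_star A).star_comm_self.eq, fun j => ?_⟩
  rw [two_inv_smul_add_add_two_mul_I_inv_smul_sub, sv_smul, norm_one_sub_I_div_two]
  have h_sv := sv_nonneg (A + Complex.I • Aᴴ) j
  have h_sqrt_sq : √2 * √2 = 2 := Real.mul_self_sqrt zero_le_two
  constructor
  · nlinarith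
  · nlinarith [Real.one_lt_sqrt_two]
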